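/- The set {⟨û₂, w(û₂)⟩ : w ∈ W(E₆)} equals {1, 1/4, −1/2}. (Equivalently: the possible distances between two vertices of type 2 of the Coxeter complex of type E₆ are exactly 0, arccos(1/4) and 2π/3; in particular a vertex of type 2 is never antipodal to another vertex of type 2.) -/

import Mathlib

noncomputable section

open scoped RealInnerProductSpace

/-- Euclidean space `ℝ⁸`. -/
abbrev E8Space := EuclideanSpace ℝ (Fin 8)

/-- The fundamental root vectors of the root system of type `E₆` inside `ℝ⁸`:
`r₁ = ½(1,1,1,−1,−1,−1,−1,−1)`, `rᵢ = eᵢ − eᵢ₋₁` for `2 ≤ i ≤ 5`, and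
`r₆ = ½(1,1,1,1,−1,1,1,1)` (here indexed by `Fin 6`, with `j = 0` corresponding
to `r₁` and `j = 5` to `r₆`). -/
def E6root : Fin 6 → E8Space := fun j =>
  if j = 0 then WithLp.toLp 2 (fun i => if (i : ℕ) < 3 then (1 : ℝ) / 2 else -(1 / 2))
  else if j = 5 then WithLp.toLp 2 (fun i => if (i : ℕ) = 4 then -(1 : ℝ) / 2 else 1 / 2)
  else WithLp.toLp 2 (fun i => if (i : ℕ) = (j : ℕ) then (1 : ℝ)
        else if (i : ℕ) + 1 = (j : ℕ) then -1 else 0)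

/-- The Weyl group `W(E₆)`: the subgroup of linear isometries of `ℝ⁸` generated by the
reflections `s_r(x) = x − 2(⟨x,r⟩/⟨r,r⟩)r` in the fundamental root vectors of type `E₆`.
These generators preserve the subspace `V = {x : x₆ = x₇ = x₈}` realizing the Coxeter
complex of type `E₆`. -/
def WeylE6 : Subgroup (E8Space ≃ₗᵢ[ℝ] E8Space) :=
  Subgroup.closure
    { f | ∃ j : Fin 6, ∀ x : E8Space,
        f x = x - ((2 * ⟪x, E6root j⟫ / ⟪E6root j, E6root j⟫) • E6root j) }

/-- `û₂ = (−3,3,3,3,3,−1,−1,−1)/(4√3)`, a unit vector representing a vertex of type 2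
of the Coxeter complex of type `E₆`. -/
def u2hatE6 : E8Space := WithLp.toLp 2 (fun i =>
  (if (i : ℕ) = 0 then -3 else if (i : ℕ) < 5 then 3 else -1) / (4 * Real.sqrt 3))

/-- `û₆ = (3,3,3,3,3,1,1,1)/(4√3)`, a unit vector representing a vertex of type 6
of the Coxeter complex of type `E₆`. -/
def u6hatE6 : E8Space := WithLp.toLp 2 (fun i =>
  (if (i : ℕ) < 5 then 3 else 1) / (4 * Real.sqrt 3))


/-!
Write `û₂ = (√3/2) • ω` with `ω = (-3,3,3,3,3,-1,-1,-1)/6`, the fundamental weight with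
`⟪ω, rⱼ⟫ = δⱼ₂`. A simple reflection moves a vector of the weight lattice
`{x | ∀ j, ⟪x, rⱼ⟫ ∈ ℤ}` by an integer multiple of its root, so `w ω - ω` lies in the root
lattice `Q` for every `w ∈ W(E₆)`; since `⟪ω, Q⟫ ⊆ ℤ`, this gives `⟪ω, w ω⟫ ∈ 4/3 + ℤ`. By
Cauchy–Schwarz `|⟪ω, w ω⟫| ≤ ‖ω‖² = 4/3`, which leaves `4/3, 1/3, -2/3` (and excludes `-4/3`:
antipodes would need `8/3 ∈ ℤ`). All three values occur, for `w = 1`, `s₂` and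
`s₂s₃s₄s₅s₁s₄s₃s₂`; scaling by `3/4` gives `1, 1/4, -1/2`.
-/

section ReflectionGroup

variable {E ι : Type*} [NormedAddCommGroup E] [InnerProductSpace ℝ E]

def reflectionGroup (R : ι → E) : Subgroup (E ≃ₗᵢ[ℝ] E) :=
  Subgroup.closure {f | ∃ j, ∀ x, f x = x - (2 * ⟪x, R j⟫ / ⟪R j, R j⟫) • R j}

def rootLattice (R : ι → E) : AddSubgroup E :=
  AddSubgroup.closure (Set.range R)

def weightLattice (R : ι → E) : AddSubgroup E :=
  ⨅ j, (AddSubgroup.zmultiples (1 : ℝ)).comap (innerₛₗ ℝ (R j)).toAddMonoidHom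

def simpleReflection (R : ι → E) (j : ι) : E ≃ₗᵢ[ℝ] E :=
  (ℝ ∙ R j)ᗮ.reflection

variable {R : ι → E}

theorem mem_weightLattice {x : E} : x ∈ weightLattice R ↔ ∀ j, ∃ n : ℤ, ⟪x, R j⟫ = n := by
  simp [weightLattice, AddSubgroup.mem_zmultiples_iff, real_inner_comm, eq_comm]

theorem rootLattice_le_weightLattice (hR : ∀ i, R i ∈ weightLattice R) :
    rootLattice R ≤ weightLattice R :=
  (AddSubgroup.closure_le _).2 (Set.range_subset_iff.2 hR)

theorem exists_inner_eq_intCast_of_mem_rootLattice {x q : E} (hx : x ∈ weightLattice R)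
    (hq : q ∈ rootLattice R) : ∃ n : ℤ, ⟪x, q⟫ = n := by
  suffices rootLattice R ≤ (AddSubgroup.zmultiples (1 : ℝ)).comap (innerₛₗ ℝ x).toAddMonoidHom by
    simpa [AddSubgroup.mem_zmultiples_iff, eq_comm] using this hq
  refine (AddSubgroup.closure_le _).2 (Set.range_subset_iff.2 fun j => ?_)
  obtain ⟨n, hn⟩ := mem_weightLattice.1 hx j
  simp [AddSubgroup.mem_zmultiples_iff, hn]

theorem apply_eq_sub_inner_smul {f : E ≃ₗᵢ[ℝ] E} {r : E} (hr : ⟪r, r⟫ = 2)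
    (hf : ∀ x, f x = x - (2 * ⟪x, r⟫ / ⟪r, r⟫) • r) (x : E) : f x = x - ⟪x, r⟫ • r := by
  rw [hf, hr, mul_div_cancel_left₀ _ two_ne_zero]

theorem mul_self_eq_one_of_apply_eq_sub_inner_smul {f : E ≃ₗᵢ[ℝ] E} {r : E} (hr : ⟪r, r⟫ = 2)
    (hf : ∀ x, f x = x - ⟪x, r⟫ • r) : f * f = 1 := by
  ext x
  rw [LinearIsometryEquiv.coe_mul, Function.comp_apply, hf (f x), hf x, inner_sub_left,
    real_inner_smul_left, hr, LinearIsometryEquiv.coe_one, id]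
  module

theorem sub_mem_rootLattice_of_apply_eq_sub_inner_smul {f : E ≃ₗᵢ[ℝ] E} {j : ι}
    (hf : ∀ x, f x = x - ⟪x, R j⟫ • R j) {x : E} (hx : x ∈ weightLattice R) :
    f x - x ∈ rootLattice R := by
  obtain ⟨n, hn⟩ := mem_weightLattice.1 hx j
  rw [hf, sub_sub_cancel_left, hn, Int.cast_smul_eq_zsmul]
  exact neg_mem (zsmul_mem (AddSubgroup.subset_closure (Set.mem_range_self j)) n)

theorem apply_sub_mem_rootLattice (hR₂ : ∀ j, ⟪R j, R j⟫ = 2) (hR : ∀ i, R i ∈ weightLattice R)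
    {g : E ≃ₗᵢ[ℝ] E} (hg : g ∈ reflectionGroup R) {x : E} (hx : x ∈ weightLattice R) :
    g x - x ∈ rootLattice R := by
  induction hg using Subgroup.closure_induction'' generalizing x with
  | mem f hf =>
    obtain ⟨j, hf⟩ := hf
    exact sub_mem_rootLattice_of_apply_eq_sub_inner_smul (apply_eq_sub_inner_smul (hR₂ j) hf) hx
  | inv_mem f hf =>
    obtain ⟨j, hf⟩ := hf
    have hf := apply_eq_sub_inner_smul (hR₂ j) hf
    rw [inv_eq_of_mul_eq_one_left (mul_self_eq_one_of_apply_eq_sub_inner_smul (hR₂ j) hf)]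
    exact sub_mem_rootLattice_of_apply_eq_sub_inner_smul hf hx
  | one => simp
  | mul g h _ _ ihg ihh =>
    have hhx : h x ∈ weightLattice R := by
      simpa using add_mem (rootLattice_le_weightLattice hR (ihh hx)) hx
    rw [LinearIsometryEquiv.coe_mul, Function.comp_apply, ← sub_add_sub_cancel _ (h x)]
    exact add_mem (ihg hhx) (ihh hx)

theorem exists_inner_apply_eq_inner_self_add_intCast (hR₂ : ∀ j, ⟪R j, R j⟫ = 2)
    (hR : ∀ i, R i ∈ weightLattice R) {g : E ≃ₗᵢ[ℝ] E} (hg : g ∈ reflectionGroup R) {x : E}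
    (hx : x ∈ weightLattice R) : ∃ n : ℤ, ⟪x, g x⟫ = ⟪x, x⟫ + n := by
  obtain ⟨n, hn⟩ :=
    exists_inner_eq_intCast_of_mem_rootLattice hx (apply_sub_mem_rootLattice hR₂ hR hg hx)
  exact ⟨n, by rw [← hn, inner_sub_right, add_sub_cancel]⟩

theorem simpleReflection_apply (j : ι) (x : E) :
    simpleReflection R j x = x - (2 * ⟪x, R j⟫ / ⟪R j, R j⟫) • R j := by
  rw [simpleReflection, Submodule.reflection_orthogonal_apply,
    Submodule.reflection_singleton_apply, real_inner_self_eq_norm_sq, real_inner_comm]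
  module

theorem simpleReflection_mem_reflectionGroup (j : ι) : simpleReflection R j ∈ reflectionGroup R :=
  Subgroup.subset_closure ⟨j, simpleReflection_apply j⟩

theorem simpleReflection_apply_of_inner_eq_one {j : ι} (hR₂ : ⟪R j, R j⟫ = 2) {x : E}
    (hx : ⟪x, R j⟫ = 1) : simpleReflection R j x = x - R j := by
  rw [apply_eq_sub_inner_smul hR₂ (simpleReflection_apply j), hx, one_smul]

end ReflectionGroup

theorem inner_E6root (i j : Fin 6) :
    ⟪E6root i, E6root j⟫ = CartanMatrix.E₆ (Equiv.swap 0 1 i) (Equiv.swap 0 1 j) := by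
  rw [PiLp.inner_apply]
  fin_cases i <;> fin_cases j <;>
    simp [E6root, Fin.sum_univ_eight, CartanMatrix.E₆, Equiv.swap_apply_def] <;> norm_num

def weight2E6 : E8Space :=
  WithLp.toLp 2 (fun i => (if (i : ℕ) = 0 then -3 else if (i : ℕ) < 5 then 3 else -1) / 6)

theorem inner_weight2E6_E6root (j : Fin 6) : ⟪weight2E6, E6root j⟫ = if j = 1 then 1 else 0 := by
  rw [PiLp.inner_apply]
  fin_cases j <;> simp [weight2E6, E6root, Fin.sum_univ_eight] <;> norm_num

theorem inner_weight2E6_self : ⟪weight2E6, weight2E6⟫ = 4 / 3 := by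
  rw [PiLp.inner_apply]
  simp [weight2E6, Fin.sum_univ_eight]
  norm_num

theorem u2hatE6_eq_smul : u2hatE6 = (√3 / 2) • weight2E6 := by
  have h3 : √3 ^ 2 = 3 := Real.sq_sqrt (by norm_num)
  ext i
  simp only [u2hatE6, weight2E6, PiLp.smul_apply, PiLp.toLp_apply, smul_eq_mul]
  field_simp
  rw [h3]
  norm_num

theorem E6root_mem_weightLattice (i : Fin 6) : E6root i ∈ weightLattice E6root :=
  mem_weightLattice.2 fun j => ⟨_, inner_E6root i j⟩

theorem inner_E6root_self (j : Fin 6) : ⟪E6root j, E6root j⟫ = 2 := by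
  rw [inner_E6root]
  fin_cases j <;> rfl

theorem weight2E6_mem_weightLattice : weight2E6 ∈ weightLattice E6root :=
  mem_weightLattice.2 fun j => ⟨if j = 1 then 1 else 0, by
    rw [inner_weight2E6_E6root]; split_ifs <;> simp⟩

theorem inner_weight2E6_apply_mem {w : E8Space ≃ₗᵢ[ℝ] E8Space} (hw : w ∈ WeylE6) :
    ⟪weight2E6, w weight2E6⟫ ∈ ({4 / 3, 1 / 3, -2 / 3} : Set ℝ) := by
  obtain ⟨n, hn⟩ := exists_inner_apply_eq_inner_self_add_intCast inner_E6root_self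
    E6root_mem_weightLattice hw weight2E6_mem_weightLattice
  have hbound : |⟪weight2E6, w weight2E6⟫| ≤ 4 / 3 := by
    calc |⟪weight2E6, w weight2E6⟫| ≤ ‖weight2E6‖ * ‖w weight2E6‖ := abs_real_inner_le_norm _ _
      _ = 4 / 3 := by rw [w.norm_map, ← real_inner_self_eq_norm_mul_norm, inner_weight2E6_self]
  rw [hn, inner_weight2E6_self, abs_le] at hbound
  have hn₁ : -2 ≤ n := by
    have : (-3 : ℝ) < n := by linarith
    exact_mod_cast this
  have hn₂ : n ≤ 0 := by
    have : (n : ℝ) ≤ 0 := by linarith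
    exact_mod_cast this
  rw [hn, inner_weight2E6_self]
  interval_cases n <;> norm_num

theorem exists_mem_WeylE6_inner_weight2E6_apply_eq_neg :
    ∃ w ∈ WeylE6, ⟪weight2E6, w weight2E6⟫ = -2 / 3 := by
  obtain ⟨s, hs, step⟩ : ∃ s : Fin 6 → E8Space ≃ₗᵢ[ℝ] E8Space, (∀ j, s j ∈ WeylE6) ∧
      ∀ j x, ⟪x, E6root j⟫ = 1 → s j x = x - E6root j :=
    ⟨simpleReflection E6root, simpleReflection_mem_reflectionGroup,
      fun j _ => simpleReflection_apply_of_inner_eq_one (inner_E6root_self j)⟩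
  -- `w = h (s 4 * s 0) h⁻¹` with `h = s 1 * s 2 * s 3`: the two commuting reflections in the
  -- orthogonal roots `h (r 4)` and `h (r 0)`, both pairing to `1` with `ω`, lower `⟪ω, ω⟫` by `2`.
  refine ⟨s 1 * s 2 * s 3 * s 4 * s 0 * s 3 * s 2 * s 1, by aesop, ?_⟩
  set ω := weight2E6
  set r := E6root
  simp only [LinearIsometryEquiv.coe_mul, Function.comp_apply]
  rw [step 1 ω, step 2 (ω - r 1), step 3 (ω - r 1 - r 2), step 0 (ω - r 1 - r 2 - r 3),
    step 4 (ω - r 1 - r 2 - r 3 - r 0), step 3 (ω - r 1 - r 2 - r 3 - r 0 - r 4),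
    step 2 (ω - r 1 - r 2 - r 3 - r 0 - r 4 - r 3),
    step 1 (ω - r 1 - r 2 - r 3 - r 0 - r 4 - r 3 - r 2)]
  all_goals
    simp only [ω, r, inner_sub_left, inner_sub_right, inner_weight2E6_E6root, inner_E6root,
      inner_weight2E6_self]
    simp [CartanMatrix.E₆, Equiv.swap_apply_of_ne_of_ne] <;> norm_num

theorem exists_mem_WeylE6_inner_weight2E6_apply_eq_third :
    ∃ w ∈ WeylE6, ⟪weight2E6, w weight2E6⟫ = 1 / 3 := by
  have h : ⟪weight2E6, E6root 1⟫ = 1 := by simp [inner_weight2E6_E6root]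
  refine ⟨simpleReflection E6root 1, simpleReflection_mem_reflectionGroup 1, ?_⟩
  rw [simpleReflection_apply_of_inner_eq_one (inner_E6root_self 1) h, inner_sub_right,
    inner_weight2E6_self, h]
  norm_num

theorem inner_weight2E6_orbit_eq :
    {t : ℝ | ∃ w ∈ WeylE6, ⟪weight2E6, w weight2E6⟫ = t} = {4 / 3, 1 / 3, -2 / 3} := by
  ext t
  constructor
  · rintro ⟨w, hw, rfl⟩
    exact inner_weight2E6_apply_mem hw
  · rintro (rfl | rfl | rfl)
    · exact ⟨1, one_mem _, inner_weight2E6_self⟩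
    · exact exists_mem_WeylE6_inner_weight2E6_apply_eq_third
    · exact exists_mem_WeylE6_inner_weight2E6_apply_eq_neg

theorem inner_u2hatE6_apply (w : E8Space ≃ₗᵢ[ℝ] E8Space) :
    ⟪u2hatE6, w u2hatE6⟫ = 3 / 4 * ⟪weight2E6, w weight2E6⟫ := by
  have h3 : √3 * √3 = 3 := Real.mul_self_sqrt (by norm_num)
  rw [u2hatE6_eq_smul, map_smul, real_inner_smul_left, real_inner_smul_right, ← mul_assoc]
  congr 1
  linear_combination h3 / 4

theorem inner_u2hatE6_orbit_eq :
    {t : ℝ | ∃ w ∈ WeylE6, ⟪u2hatE6, w u2hatE6⟫ = t} = {1, 1/4, -1/2} := by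
  calc {t : ℝ | ∃ w ∈ WeylE6, ⟪u2hatE6, w u2hatE6⟫ = t}
      = (3 / 4 * ·) '' {t : ℝ | ∃ w ∈ WeylE6, ⟪weight2E6, w weight2E6⟫ = t} := by
        ext t
        simp [inner_u2hatE6_apply]
    _ = (3 / 4 * ·) '' {4 / 3, 1 / 3, -2 / 3} := by rw [inner_weight2E6_orbit_eq]
    _ = {1, 1/4, -1/2} := by norm_num [Set.image_insert_eq]
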